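/- Let F0, F1 be cdfs with left-continuous quantiles Q0, Q1, U ~ Uniform(0,1), Y0 = Q0(U), Y1 with cdf F1 under any coupling, and 0 < b ≤ 1. If the comonotone lower bound is strictly positive, i.e., ∫_0^b [Q1(u) - Q0(u)] du > 0, then E[(Y1 - Y0) 1{U < b}] > 0; in particular the subgroup average treatment effect E[Y1 - Y0 | U < b] is strictly positive for every joint distribution consistent with the marginals. -/

import Mathlib

/-!
Split `Y1 - Q0 U = (Y1 - Q1 U) + (Q1 U - Q0 U)`. On the event `U < b`, of mass `b`, the
comonotone outcome `Q1 U` exceeds `y` with probability at most `b - F1 y`, whereas `Y1`, whatever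
its coupling with `U`, exceeds `y` there with probability at least `b - F1 y`. So on this event
`Y1` stochastically dominates `Q1 U` and the first term has nonnegative integral, while the second
integrates to `∫ u in 0..b, Q1 u - Q0 u > 0` because `U` is uniform.
-/

open MeasureTheory Set Filter Function

noncomputable section

def IsCDF (F : ℝ → ℝ) : Prop :=
  Monotone F ∧ (∀ y, ContinuousWithinAt F (Set.Ici y) y) ∧
    Tendsto F atBot (nhds 0) ∧ Tendsto F atTop (nhds 1)

open scoped ENNReal Topology

def clip (c x : ℝ) : ℝ := max (min x c) (-c)

section Clip

variable {c t x y : ℝ}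

lemma abs_clip_le (hc : 0 ≤ c) : |clip c x| ≤ c :=
  abs_le.2 ⟨le_max_right _ _, max_le (min_le_right _ _) (by linarith)⟩

lemma neg_le_clip : -c ≤ clip c x := le_max_right _ _

lemma clip_eq_self (h : |x| ≤ c) : clip c x = x := by
  rw [abs_le] at h
  rw [clip, min_eq_left h.2, max_eq_left h.1]

lemma abs_clip_sub_clip_le : |clip c x - clip c y| ≤ |x - y| :=
  calc |clip c x - clip c y| ≤ |min x c - min y c| := abs_max_sub_max_le_abs _ _ _
    _ ≤ max |x - y| |c - c| := abs_min_sub_min_le_max _ _ _ _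
    _ = |x - y| := by simp

lemma lt_clip_iff (ht : -c ≤ t) : t < clip c x ↔ t < x ∧ t < c := by
  simp [clip, ht.not_gt]

lemma measurable_clip : Measurable (clip c) := by
  unfold clip; fun_prop

lemma tendsto_clip (x : ℝ) : Tendsto (fun n : ℕ => clip n x) atTop (𝓝 x) :=
  tendsto_const_nhds.congr' <|
    (tendsto_natCast_atTop_atTop.eventually_ge_atTop |x|).mono fun _ hn => (clip_eq_self hn).symm

end Clip

section StochasticDominance

variable {α : Type*} [MeasurableSpace α] {μ : Measure α} {f g : α → ℝ}

lemma lintegral_ofReal_le_of_meas_lt_le (hf : 0 ≤ᵐ[μ] f) (hg : 0 ≤ᵐ[μ] g)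
    (hfm : AEMeasurable f μ) (hgm : AEMeasurable g μ)
    (hdom : ∀ t, 0 < t → μ {ω | t < g ω} ≤ μ {ω | t < f ω}) :
    ∫⁻ ω, ENNReal.ofReal (g ω) ∂μ ≤ ∫⁻ ω, ENNReal.ofReal (f ω) ∂μ := by
  rw [lintegral_eq_lintegral_meas_lt μ hf hfm, lintegral_eq_lintegral_meas_lt μ hg hgm]
  exact setLIntegral_mono' measurableSet_Ioi hdom

lemma integral_le_integral_of_meas_lt_le [IsFiniteMeasure μ] {a : ℝ}
    (hf : Integrable f μ) (hg : Integrable g μ)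
    (hfa : ∀ᵐ ω ∂μ, a ≤ f ω) (hga : ∀ᵐ ω ∂μ, a ≤ g ω)
    (hdom : ∀ t, a < t → μ {ω | t < g ω} ≤ μ {ω | t < f ω}) :
    ∫ ω, g ω ∂μ ≤ ∫ ω, f ω ∂μ := by
  have hf' : Integrable (fun ω => f ω - a) μ := hf.sub (integrable_const a)
  have hg' : Integrable (fun ω => g ω - a) μ := hg.sub (integrable_const a)
  have hfa' : 0 ≤ᵐ[μ] fun ω => f ω - a := hfa.mono fun _ h => sub_nonneg.2 h
  have hga' : 0 ≤ᵐ[μ] fun ω => g ω - a := hga.mono fun _ h => sub_nonneg.2 h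
  have hshift : ∫ ω, g ω - a ∂μ ≤ ∫ ω, f ω - a ∂μ := by
    rw [integral_eq_lintegral_of_nonneg_ae hfa' hf'.1,
      integral_eq_lintegral_of_nonneg_ae hga' hg'.1]
    refine ENNReal.toReal_mono hf'.lintegral_lt_top.ne ?_
    refine lintegral_ofReal_le_of_meas_lt_le hfa' hga' hf'.1.aemeasurable hg'.1.aemeasurable
      fun t ht => ?_
    simpa only [lt_sub_iff_add_lt] using hdom (t + a) (by linarith)
  rwa [integral_sub hf (integrable_const a), integral_sub hg (integrable_const a),
    sub_le_sub_iff_right] at hshift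

lemma integrable_clip_comp [IsFiniteMeasure μ] (hf : AEMeasurable f μ) {c : ℝ} (hc : 0 ≤ c) :
    Integrable (fun ω => clip c (f ω)) μ :=
  .of_bound (measurable_clip.comp_aemeasurable hf).aestronglyMeasurable c
    (ae_of_all _ fun _ => abs_clip_le hc)

-- Both sides are truncated to `[-n, n]`, which preserves the dominance; the truncated
-- integrals converge by dominated convergence with the integrable bound `|f - g|`.
theorem integral_sub_nonneg_of_meas_lt_le [IsFiniteMeasure μ]
    (hf : AEMeasurable f μ) (hg : AEMeasurable g μ) (hfg : Integrable (fun ω => f ω - g ω) μ)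
    (hdom : ∀ t, μ {ω | t < g ω} ≤ μ {ω | t < f ω}) :
    0 ≤ ∫ ω, f ω - g ω ∂μ := by
  have hclip (n : ℕ) : ∫ ω, clip n (g ω) ∂μ ≤ ∫ ω, clip n (f ω) ∂μ := by
    refine integral_le_integral_of_meas_lt_le (integrable_clip_comp hf n.cast_nonneg)
      (integrable_clip_comp hg n.cast_nonneg) (ae_of_all _ fun _ => neg_le_clip)
      (ae_of_all _ fun _ => neg_le_clip) fun t ht => ?_
    simp only [lt_clip_iff ht.le]
    by_cases htn : t < n <;> simp [htn, hdom t]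
  have hlim : Tendsto (fun n : ℕ => ∫ ω, clip n (f ω) - clip n (g ω) ∂μ) atTop
      (𝓝 (∫ ω, f ω - g ω ∂μ)) :=
    tendsto_integral_of_dominated_convergence _
      (fun n => ((measurable_clip.comp_aemeasurable hf).sub
        (measurable_clip.comp_aemeasurable hg)).aestronglyMeasurable)
      hfg.abs (fun n => ae_of_all _ fun _ => abs_clip_sub_clip_le)
      (ae_of_all _ fun ω => (tendsto_clip (f ω)).sub (tendsto_clip (g ω)))
  refine ge_of_tendsto' hlim fun n => ?_
  rw [integral_sub (integrable_clip_comp hf n.cast_nonneg) (integrable_clip_comp hg n.cast_nonneg)]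
  linarith [hclip n]

end StochasticDominance

-- For `u ≤ 0` the set is all of `ℝ` and for `u > 1` it is empty; `sInf` then returns the junk `0`.
def quantile (F : ℝ → ℝ) (u : ℝ) : ℝ := sInf {y | u ≤ F y}

namespace IsCDF

variable {F : ℝ → ℝ} {u y : ℝ}

lemma nonneg (hF : IsCDF F) (y : ℝ) : 0 ≤ F y :=
  hF.1.le_of_tendsto hF.2.2.1 y

lemma quantile_le_iff (hF : IsCDF F) (hu0 : 0 < u) (hu1 : u < 1) :
    quantile F u ≤ y ↔ u ≤ F y := by
  obtain ⟨hmono, hrc, hbot, htop⟩ := hF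
  set S := {z | u ≤ F z}
  have hne : S.Nonempty := (htop.eventually (eventually_ge_nhds hu1)).exists
  have hbdd : BddBelow S := by
    obtain ⟨z₀, hz₀⟩ := (hbot.eventually (eventually_lt_nhds hu0)).exists
    exact ⟨z₀, fun z hz => le_of_not_gt fun hz₀z => (hz.trans (hmono hz₀z.le)).not_gt hz₀⟩
  refine ⟨fun h => le_trans ?_ (hmono h), fun h => csInf_le hbdd h⟩
  -- Right-continuity of `F` at `sInf S`, approached from within `S`.
  have hnb : (𝓝[S] sInf S).NeBot := mem_closure_iff_nhdsWithin_neBot.1 (csInf_mem_closure hne hbdd)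
  have hlim : Tendsto F (𝓝[S] sInf S) (𝓝 (F (sInf S))) :=
    (hrc (sInf S)).mono_left (nhdsWithin_mono _ fun z hz => csInf_le hbdd hz)
  exact ge_of_tendsto hlim (eventually_nhdsWithin_of_forall fun z hz => hz)

lemma lt_quantile_iff (hF : IsCDF F) (hu0 : 0 < u) (hu1 : u < 1) :
    y < quantile F u ↔ F y < u :=
  not_le.symm.trans ((hF.quantile_le_iff hu0 hu1).not.trans not_le)

lemma monotoneOn_quantile (hF : IsCDF F) : MonotoneOn (quantile F) (Ioo 0 1) :=
  fun _ hu _ hv huv => (hF.quantile_le_iff hu.1 hu.2).2 <|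
    huv.trans ((hF.quantile_le_iff hv.1 hv.2).1 le_rfl)

end IsCDF

section Coupling

variable {Ω : Type*} [MeasurableSpace Ω] {μ : Measure Ω} {U X : Ω → ℝ} {F : ℝ → ℝ} {a b c : ℝ}

lemma map_restrict_lt_eq (hU : Measurable U) (hUlaw : μ.map U = volume.restrict (Ioo a c))
    (hbc : b ≤ c) : (μ.restrict {ω | U ω < b}).map U = volume.restrict (Ioo a b) := by
  change (μ.restrict (U ⁻¹' Iio b)).map U = _
  rw [← Measure.restrict_map hU measurableSet_Iio, hUlaw,
    Measure.restrict_restrict measurableSet_Iio, Iio_inter_Ioo, min_eq_left hbc]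

lemma integrable_comp_of_map_eq {g : ℝ → ℝ} (hU : AEMeasurable U μ)
    (hmap : μ.map U = volume.restrict (Ioo 0 b)) (hb : 0 ≤ b)
    (hg : IntervalIntegrable g volume 0 b) :
    Integrable (fun ω => g (U ω)) μ := by
  rw [intervalIntegrable_iff_integrableOn_Ioo_of_le hb, IntegrableOn, ← hmap] at hg
  exact (integrable_map_measure hg.1 hU).1 hg

lemma integral_comp_of_map_eq {g : ℝ → ℝ} (hU : AEMeasurable U μ)
    (hmap : μ.map U = volume.restrict (Ioo 0 b)) (hb : 0 ≤ b)
    (hg : IntervalIntegrable g volume 0 b) :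
    ∫ ω, g (U ω) ∂μ = ∫ u in 0..b, g u := by
  rw [intervalIntegrable_iff_integrableOn_Ioo_of_le hb, IntegrableOn, ← hmap] at hg
  rw [← integral_map hU hg.1, hmap, intervalIntegral.integral_of_le hb,
    integral_Ioc_eq_integral_Ioo]

lemma measure_lt_quantile_comp_le (hF : IsCDF F) (hU : AEMeasurable U μ)
    (hmap : μ.map U = volume.restrict (Ioo 0 b)) (hb : b ≤ 1) (y : ℝ) :
    μ {ω | y < quantile F (U ω)} ≤ ENNReal.ofReal (b - F y) :=
  calc μ (U ⁻¹' {u | y < quantile F u})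
      ≤ μ.map U {u | y < quantile F u} := Measure.le_map_apply hU _
    _ = volume ({u | y < quantile F u} ∩ Ioo 0 b) := by
      rw [hmap, Measure.restrict_apply' measurableSet_Ioo]
    _ ≤ volume (Ioo (F y) b) := measure_mono fun u ⟨hy, hu⟩ =>
      ⟨(hF.lt_quantile_iff hu.1 (hu.2.trans_le hb)).1 hy, hu.2⟩
    _ = ENNReal.ofReal (b - F y) := Real.volume_Ioo

lemma measure_lt_quantile_comp_le_measure_lt (hF : IsCDF F) (hU : AEMeasurable U μ)
    (hmap : μ.map U = volume.restrict (Ioo 0 b)) (hb : b ≤ 1)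
    (hX : ∀ y, μ {ω | X ω ≤ y} ≤ ENNReal.ofReal (F y)) (y : ℝ) :
    μ {ω | y < quantile F (U ω)} ≤ μ {ω | y < X ω} := by
  have hμ : μ univ = ENNReal.ofReal b :=
    calc μ univ = μ.map U univ := by
          rw [Measure.map_apply_of_aemeasurable hU .univ, preimage_univ]
      _ = ENNReal.ofReal b := by simp [hmap]
  calc μ {ω | y < quantile F (U ω)} ≤ ENNReal.ofReal (b - F y) :=
        measure_lt_quantile_comp_le hF hU hmap hb y
    _ = μ univ - ENNReal.ofReal (F y) := by rw [hμ, ENNReal.ofReal_sub _ (hF.nonneg y)]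
    _ ≤ μ univ - μ {ω | X ω ≤ y} := tsub_le_tsub_left (hX y) _
    _ ≤ μ {ω | y < X ω} := by
      rw [tsub_le_iff_left]
      simpa [Set.compl_def] using measure_univ_le_add_compl (μ := μ) {ω | X ω ≤ y}

end Coupling

theorem positive_lower_bound_certifies_positive_ste_general
    {Ω : Type*} [MeasurableSpace Ω] (μ : Measure Ω) [IsProbabilityMeasure μ]
    (U Y1 : Ω → ℝ) (F1 Q0 Q1 : ℝ → ℝ)
    (hF1 : IsCDF F1)
    (hQ1 : ∀ u, Q1 u = sInf {y : ℝ | u ≤ F1 y})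
    (hU : Measurable U) (hUlaw : μ.map U = volume.restrict (Set.Ioo (0:ℝ) 1))
    (hY1 : Measurable Y1) (hY1law : ∀ y, (μ {ω | Y1 ω ≤ y}).toReal = F1 y)
    (b : ℝ) (hb0 : 0 < b) (hb1 : b ≤ 1)
    (hint : IntegrableOn (fun ω => Y1 ω - Q0 (U ω)) {ω | U ω < b} μ)
    (hint' : IntervalIntegrable (fun u => Q1 u - Q0 u) volume 0 b)
    (hpos : 0 < ∫ u in (0:ℝ)..b, (Q1 u - Q0 u)) :
    0 < ∫ ω in {ω | U ω < b}, (Y1 ω - Q0 (U ω)) ∂μ := by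
  obtain rfl : Q1 = quantile F1 := funext hQ1
  set ν := μ.restrict {ω | U ω < b}
  have hmap : ν.map U = volume.restrict (Ioo 0 b) := map_restrict_lt_eq hU hUlaw hb1
  have hQ1U : AEMeasurable (fun ω => quantile F1 (U ω)) ν := by
    refine AEMeasurable.comp_aemeasurable (g := quantile F1) (f := U) ?_ hU.aemeasurable
    rw [hmap]
    exact aemeasurable_restrict_of_monotoneOn measurableSet_Ioo
      (hF1.monotoneOn_quantile.mono (Ioo_subset_Ioo_right hb1))
  have hY1le (y : ℝ) : ν {ω | Y1 ω ≤ y} ≤ ENNReal.ofReal (F1 y) := by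
    rw [← hY1law, ENNReal.ofReal_toReal (measure_ne_top μ _)]
    exact Measure.restrict_apply_le _ _
  have hgap : Integrable (fun ω => quantile F1 (U ω) - Q0 (U ω)) ν :=
    integrable_comp_of_map_eq hU.aemeasurable hmap hb0.le hint'
  have hrest : Integrable (fun ω => Y1 ω - quantile F1 (U ω)) ν := by
    have hint₀ : Integrable (fun ω => Y1 ω - Q0 (U ω)) ν := hint
    exact (hint₀.sub hgap).congr (ae_of_all _ fun _ => sub_sub_sub_cancel_right _ _ _)
  have hrest_nonneg : 0 ≤ ∫ ω, Y1 ω - quantile F1 (U ω) ∂ν :=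
    integral_sub_nonneg_of_meas_lt_le hY1.aemeasurable hQ1U hrest
      (measure_lt_quantile_comp_le_measure_lt hF1 hU.aemeasurable hmap hb1 hY1le)
  calc 0 < ∫ ω, Y1 ω - quantile F1 (U ω) ∂ν + ∫ u in 0..b, quantile F1 u - Q0 u := by linarith
    _ = ∫ ω, Y1 ω - Q0 (U ω) ∂ν := by
      rw [← integral_comp_of_map_eq hU.aemeasurable hmap hb0.le hint', ← integral_add hrest hgap]
      simp only [sub_add_sub_cancel]

theorem positive_lower_bound_certifies_positive_ste
    {Ω : Type*} [MeasurableSpace Ω] (μ : Measure Ω) [IsProbabilityMeasure μ]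
    (U Y1 : Ω → ℝ) (F0 F1 Q0 Q1 : ℝ → ℝ)
    (hF0 : IsCDF F0) (hF1 : IsCDF F1)
    (hQ0 : ∀ u, Q0 u = sInf {y : ℝ | u ≤ F0 y})
    (hQ1 : ∀ u, Q1 u = sInf {y : ℝ | u ≤ F1 y})
    (hU : Measurable U) (hUlaw : μ.map U = volume.restrict (Set.Ioo (0:ℝ) 1))
    (hY1 : Measurable Y1) (hY1law : ∀ y, (μ {ω | Y1 ω ≤ y}).toReal = F1 y)
    (b : ℝ) (hb0 : 0 < b) (hb1 : b ≤ 1)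
    (hint : IntegrableOn (fun ω => Y1 ω - Q0 (U ω)) {ω | U ω < b} μ)
    (hint' : IntervalIntegrable (fun u => Q1 u - Q0 u) volume 0 b)
    (hpos : 0 < ∫ u in (0:ℝ)..b, (Q1 u - Q0 u)) :
    0 < ∫ ω in {ω | U ω < b}, (Y1 ω - Q0 (U ω)) ∂μ :=
  positive_lower_bound_certifies_positive_ste_general μ U Y1 F1 Q0 Q1 hF1 hQ1 hU hUlaw hY1 hY1law b
    hb0 hb1 hint hint' hpos
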